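/- Let 0 < ζ < 1/2 and define h_{jk} = Σ_{t=1}^n (t+j)^{-1}|λ_{kt}| where |λ_{kt}| ≤ C k^ζ t^{-ζ-1} for 1 ≤ k ≤ t and |λ_{kt}| ≤ C k^{ζ-1} max(k^{-ζ}, t^{-ζ}) for k > t. Then for all j ≥ 1: h_{jk} ≤ C' j^{-1/2} min(j^{-1/2}, k^{-1/2}) for 1 ≤ k ≤ n, and h_{jk} ≤ C' j^{-1} k^{ζ-1} n^{1/2-ζ} min(j^{1/2}, n^{1/2}) for k ≥ n. -/

import Mathlib

/-!
For `θ ∈ [0, 1]`, weighted AM-GM gives `(t + j)⁻¹ ≤ j ^ (θ - 1) * t ^ (-θ)`, so the bounds on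
`λ` reduce `h_{jk}` to power sums `∑ t ^ (-s)`: over `t ≤ min k n` with `s = ζ + θ < 1`, and over
`k < t ≤ n` with `s = ζ + 1 + θ > 1`. Both are compared with `k ^ (1 - s)` or `n ^ (1 - s)` by
telescoping the Bernoulli inequality for `x ↦ x ^ (1 - s)`. Taking `θ = 0` and `θ = 1 / 2`
gives the two terms of each minimum.
-/

open Real Finset

lemma inv_add_le_rpow_mul_rpow {x y θ : ℝ} (hx : 0 < x) (hy : 0 < y) (hθ₀ : 0 ≤ θ)
    (hθ₁ : θ ≤ 1) : (x + y)⁻¹ ≤ y ^ (θ - 1) * x ^ (-θ) := by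
  have hgm : x ^ θ * y ^ (1 - θ) ≤ x + y := by
    have := geom_mean_le_arith_mean2_weighted hθ₀ (sub_nonneg.2 hθ₁) hx.le hy.le (by ring)
    nlinarith
  calc (x + y)⁻¹ ≤ (x ^ θ * y ^ (1 - θ))⁻¹ := inv_anti₀ (by positivity) hgm
    _ = y ^ (θ - 1) * x ^ (-θ) := by
      rw [mul_inv, ← rpow_neg hx.le, ← rpow_neg hy.le, neg_sub, mul_comm]

lemma mul_rpow_sub_one_le_rpow_sub_rpow {p x : ℝ} (hp₀ : 0 ≤ p) (hp₁ : p ≤ 1) (hx : 1 ≤ x) :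
    p * x ^ (p - 1) ≤ x ^ p - (x - 1) ^ p := by
  have hx₀ : 0 < x := by linarith
  have hu : x⁻¹ ≤ 1 := inv_le_one_of_one_le₀ hx
  have hbern : (1 + -x⁻¹) ^ p ≤ 1 + p * -x⁻¹ :=
    rpow_one_add_le_one_add_mul_self (by linarith) hp₀ hp₁
  have hsplit : (x - 1) ^ p = x ^ p * (1 + -x⁻¹) ^ p := by
    rw [← mul_rpow hx₀.le (by linarith)]
    congr 1
    field_simp
    ring
  rw [hsplit, rpow_sub_one hx₀.ne']
  have := mul_le_mul_of_nonneg_left hbern (rpow_nonneg hx₀.le p)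
  linarith [show x ^ p * (1 + p * -x⁻¹) = x ^ p - p * (x ^ p / x) by ring]

lemma one_add_mul_le_one_sub_rpow_neg {q u : ℝ} (hq : 0 ≤ q) (hu : u < 1) :
    1 + q * u ≤ (1 - u) ^ (-q) := by
  have h₀ : 0 < 1 - u := by linarith
  rw [rpow_def_of_pos h₀]
  refine le_trans ?_ (add_one_le_exp _)
  nlinarith [log_le_sub_one_of_pos h₀]

lemma mul_rpow_neg_sub_one_le_rpow_sub_rpow {q x : ℝ} (hq : 0 ≤ q) (hx : 1 < x) :
    q * x ^ (-q - 1) ≤ (x - 1) ^ (-q) - x ^ (-q) := by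
  have hx₀ : 0 < x := by linarith
  have hu : x⁻¹ < 1 := inv_lt_one_of_one_lt₀ hx
  have hsplit : (x - 1) ^ (-q) = x ^ (-q) * (1 - x⁻¹) ^ (-q) := by
    rw [← mul_rpow hx₀.le (by linarith)]
    congr 1
    field_simp
  rw [hsplit, rpow_sub_one hx₀.ne']
  have := mul_le_mul_of_nonneg_left (one_add_mul_le_one_sub_rpow_neg hq hu)
    (rpow_nonneg hx₀.le (-q))
  linarith [show x ^ (-q) * (1 + q * x⁻¹) = x ^ (-q) + q * (x ^ (-q) / x) by ring]

lemma sum_Ioc_le_sub_of_le_sub {f g : ℕ → ℝ} {a b : ℕ} (hab : a ≤ b)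
    (h : ∀ t ∈ Ioc a b, f t ≤ g t - g (t - 1)) : ∑ t ∈ Ioc a b, f t ≤ g b - g a := by
  induction b, hab using Nat.le_induction with
  | base => simp
  | succ b hab ih =>
    rw [sum_Ioc_succ_top hab]
    have hlast := h (b + 1) (mem_Ioc.2 ⟨by omega, le_rfl⟩)
    have hrest := ih fun t ht => h t (Ioc_subset_Ioc_right (Nat.le_succ b) ht)
    simp only [Nat.add_sub_cancel] at hlast
    linarith

lemma sum_Ioc_rpow_neg_le {s : ℝ} (hs₀ : 0 ≤ s) (hs₁ : s < 1) (m : ℕ) :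
    ∑ t ∈ Ioc 0 m, (t : ℝ) ^ (-s) ≤ (1 - s)⁻¹ * (m : ℝ) ^ (1 - s) := by
  have hp : 0 < 1 - s := by linarith
  have key := sum_Ioc_le_sub_of_le_sub (f := fun t : ℕ => (t : ℝ) ^ (-s))
    (g := fun t : ℕ => (1 - s)⁻¹ * (t : ℝ) ^ (1 - s)) (Nat.zero_le m) fun t ht => by
      have ht₁ : (1 : ℝ) ≤ t := by exact_mod_cast (mem_Ioc.1 ht).1
      have := mul_rpow_sub_one_le_rpow_sub_rpow hp.le (by linarith) ht₁
      rw [show 1 - s - 1 = -s by ring] at this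
      simp only [Nat.cast_pred (mem_Ioc.1 ht).1]
      rw [← mul_sub, le_inv_mul_iff₀ hp]
      exact this
  simpa [zero_rpow hp.ne'] using key

lemma sum_Ioc_rpow_neg_le_of_one_lt {s : ℝ} (hs : 1 < s) {k : ℕ} (hk : 0 < k) (n : ℕ) :
    ∑ t ∈ Ioc k n, (t : ℝ) ^ (-s) ≤ (s - 1)⁻¹ * (k : ℝ) ^ (1 - s) := by
  have hq : 0 < s - 1 := by linarith
  rcases le_total n k with hnk | hkn
  · rw [Ioc_eq_empty_of_le hnk, sum_empty]
    positivity
  have key := sum_Ioc_le_sub_of_le_sub (f := fun t : ℕ => (t : ℝ) ^ (-s))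
    (g := fun t : ℕ => -((s - 1)⁻¹ * (t : ℝ) ^ (1 - s))) hkn fun t ht => by
      have ht₁ : (1 : ℝ) < t := Nat.one_lt_cast.2 (by have := (mem_Ioc.1 ht).1; omega)
      have := mul_rpow_neg_sub_one_le_rpow_sub_rpow hq.le ht₁
      rw [show -(s - 1) - 1 = -s by ring, neg_sub] at this
      simp only [Nat.cast_pred (hk.trans (mem_Ioc.1 ht).1)]
      rw [neg_sub_neg, ← mul_sub, le_inv_mul_iff₀ hq]
      exact this
  refine key.trans ?_
  have : 0 ≤ (s - 1)⁻¹ * (n : ℝ) ^ (1 - s) := by positivity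
  linarith

lemma sum_inv_add_mul_abs_le {s : Finset ℕ} {a : ℕ → ℝ} {c σ θ y : ℝ} (hs : ∀ t ∈ s, 0 < t)
    (hy : 0 < y) (hθ₀ : 0 ≤ θ) (hθ₁ : θ ≤ 1) (ha : ∀ t ∈ s, |a t| ≤ c * (t : ℝ) ^ (-σ)) :
    ∑ t ∈ s, ((t : ℝ) + y)⁻¹ * |a t| ≤ c * y ^ (θ - 1) * ∑ t ∈ s, (t : ℝ) ^ (-(σ + θ)) := by
  rw [mul_sum]
  refine sum_le_sum fun t ht => ?_
  have ht₀ : (0 : ℝ) < t := by exact_mod_cast hs t ht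
  calc ((t : ℝ) + y)⁻¹ * |a t| ≤ (y ^ (θ - 1) * (t : ℝ) ^ (-θ)) * (c * (t : ℝ) ^ (-σ)) :=
        mul_le_mul (inv_add_le_rpow_mul_rpow ht₀ hy hθ₀ hθ₁) (ha t ht) (abs_nonneg _)
          (by positivity)
    _ = c * y ^ (θ - 1) * (t : ℝ) ^ (-(σ + θ)) := by
        rw [neg_add, rpow_add ht₀]
        ring

/-- The quantity `h_{jk}` (summation length `n`). -/
noncomputable def weightedRowSum (lam : ℕ → ℕ → ℝ) (n j k : ℕ) : ℝ :=
  ∑ t ∈ Icc 1 n, ((t : ℝ) + j)⁻¹ * |lam k t|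

structure CoeffBounds (ζ C : ℝ) (lam : ℕ → ℕ → ℝ) : Prop where
  abs_le_of_le : ∀ k t : ℕ, 1 ≤ k → k ≤ t → |lam k t| ≤ C * (k : ℝ) ^ ζ * (t : ℝ) ^ (-ζ - 1)
  abs_le_of_lt : ∀ k t : ℕ, 1 ≤ t → t < k →
    |lam k t| ≤ C * (k : ℝ) ^ (ζ - 1) * max ((k : ℝ) ^ (-ζ)) ((t : ℝ) ^ (-ζ))

namespace CoeffBounds

variable {ζ C : ℝ} {lam : ℕ → ℕ → ℝ}

lemma mono (h : CoeffBounds ζ C lam) {C' : ℝ} (hC : C ≤ C') : CoeffBounds ζ C' lam where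
  abs_le_of_le k t hk hkt := (h.abs_le_of_le k t hk hkt).trans (by gcongr)
  abs_le_of_lt k t ht htk := (h.abs_le_of_lt k t ht htk).trans (by gcongr)

lemma nonneg (h : CoeffBounds ζ C lam) : 0 ≤ C := by
  simpa using (abs_nonneg _).trans (h.abs_le_of_le 1 1 le_rfl le_rfl)

lemma abs_le_of_ge (h : CoeffBounds ζ C lam) (hζ : 0 ≤ ζ) {k t : ℕ} (ht : 1 ≤ t) (htk : t ≤ k) :
    |lam k t| ≤ C * (k : ℝ) ^ (ζ - 1) * (t : ℝ) ^ (-ζ) := by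
  have ht₀ : (0 : ℝ) < t := by exact_mod_cast ht
  rcases htk.lt_or_eq with htk | rfl
  · rw [← max_eq_right (rpow_le_rpow_of_nonpos ht₀ (Nat.cast_le.2 htk.le) (neg_nonpos.2 hζ))]
    exact h.abs_le_of_lt k t ht htk
  · convert h.abs_le_of_le t t ht le_rfl using 1
    rw [mul_assoc, mul_assoc, ← rpow_add ht₀, ← rpow_add ht₀]
    ring_nf

lemma weightedRowSum_le_of_le (h : CoeffBounds ζ C lam) {θ : ℝ} (hζ : 0 ≤ ζ) (hθ : 0 ≤ θ)
    (hζθ : ζ + θ < 1) {n j k : ℕ} (hj : 0 < j) (hnk : n ≤ k) :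
    weightedRowSum lam n j k
      ≤ C * (1 - (ζ + θ))⁻¹ * (j : ℝ) ^ (θ - 1) * (k : ℝ) ^ (ζ - 1) * (n : ℝ) ^ (1 - (ζ + θ)) := by
  rw [weightedRowSum, show Icc 1 n = Ioc 0 n from Icc_add_one_left_eq_Ioc 0 n]
  refine (sum_inv_add_mul_abs_le (fun t ht => (mem_Ioc.1 ht).1) (Nat.cast_pos.2 hj) hθ
    (by linarith) fun t ht => h.abs_le_of_ge hζ (mem_Ioc.1 ht).1
      ((mem_Ioc.1 ht).2.trans hnk)).trans ?_
  calc _ ≤ C * (k : ℝ) ^ (ζ - 1) * (j : ℝ) ^ (θ - 1)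
        * ((1 - (ζ + θ))⁻¹ * (n : ℝ) ^ (1 - (ζ + θ))) := by
        have := h.nonneg
        gcongr
        exact sum_Ioc_rpow_neg_le (by linarith) hζθ n
    _ = _ := by ring

lemma weightedRowSum_le_of_ge (h : CoeffBounds ζ C lam) {θ : ℝ} (hζ : 0 ≤ ζ) (hθ : 0 ≤ θ)
    (hζθ₀ : 0 < ζ + θ) (hζθ₁ : ζ + θ < 1) {n j k : ℕ} (hj : 0 < j) (hk : 0 < k) (hkn : k ≤ n) :
    weightedRowSum lam n j k
      ≤ C * ((1 - (ζ + θ))⁻¹ + (ζ + θ)⁻¹) * (j : ℝ) ^ (θ - 1) * (k : ℝ) ^ (-θ) := by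
  have hk₀ : (0 : ℝ) < k := by exact_mod_cast hk
  have hC := h.nonneg
  have hhead := h.weightedRowSum_le_of_le (n := k) hζ hθ hζθ₁ hj le_rfl
  have htail : ∑ t ∈ Ioc k n, ((t : ℝ) + j)⁻¹ * |lam k t|
      ≤ C * (k : ℝ) ^ ζ * (j : ℝ) ^ (θ - 1) * ((ζ + θ)⁻¹ * (k : ℝ) ^ (1 - (ζ + 1 + θ))) := by
    refine (sum_inv_add_mul_abs_le (c := C * (k : ℝ) ^ ζ) (σ := ζ + 1)
      (fun t ht => hk.trans (mem_Ioc.1 ht).1) (Nat.cast_pos.2 hj) hθ (by linarith)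
      fun t ht => ?_).trans ?_
    · rw [neg_add']
      exact h.abs_le_of_le k t hk (mem_Ioc.1 ht).1.le
    · gcongr
      have := sum_Ioc_rpow_neg_le_of_one_lt (s := ζ + 1 + θ) (by linarith) hk n
      rwa [show ζ + 1 + θ - 1 = ζ + θ by ring] at this
  have e₁ : (k : ℝ) ^ (ζ - 1) * (k : ℝ) ^ (1 - (ζ + θ)) = (k : ℝ) ^ (-θ) := by
    rw [← rpow_add hk₀]; congr 1; ring
  have e₂ : (k : ℝ) ^ ζ * (k : ℝ) ^ (1 - (ζ + 1 + θ)) = (k : ℝ) ^ (-θ) := by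
    rw [← rpow_add hk₀]; congr 1; ring
  rw [weightedRowSum, show Icc 1 k = Ioc 0 k from Icc_add_one_left_eq_Ioc 0 k] at hhead
  rw [weightedRowSum, show Icc 1 n = Ioc 0 n from Icc_add_one_left_eq_Ioc 0 n,
    ← sum_Ioc_consecutive _ (Nat.zero_le k) hkn]
  refine (add_le_add hhead htail).trans_eq ?_
  linear_combination (C * (1 - (ζ + θ))⁻¹ * (j : ℝ) ^ (θ - 1)) * e₁
    + (C * (ζ + θ)⁻¹ * (j : ℝ) ^ (θ - 1)) * e₂

lemma weightedRowSum_le_mul_min_of_ge (h : CoeffBounds ζ C lam) {K : ℝ} (hζ₀ : 0 < ζ)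
    (hζ₁ : ζ < 1 / 2) (hK₀ : (1 - ζ)⁻¹ + ζ⁻¹ ≤ K) (hK₁ : (1 / 2 - ζ)⁻¹ + (ζ + 1 / 2)⁻¹ ≤ K)
    {n j k : ℕ} (hj : 0 < j) (hk : 0 < k) (hkn : k ≤ n) :
    weightedRowSum lam n j k ≤ C * K * (j : ℝ) ^ (-(1 : ℝ) / 2) *
      min ((j : ℝ) ^ (-(1 : ℝ) / 2)) ((k : ℝ) ^ (-(1 : ℝ) / 2)) := by
  have hj₀ : (0 : ℝ) < j := Nat.cast_pos.2 hj
  have hC := h.nonneg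
  have hK : 0 ≤ K :=
    le_trans (add_nonneg (inv_nonneg.2 (by linarith)) (inv_nonneg.2 hζ₀.le)) hK₀
  rw [mul_min_of_nonneg _ _ (by positivity)]
  refine le_min ?_ ?_
  · calc _ ≤ C * ((1 - (ζ + 0))⁻¹ + (ζ + 0)⁻¹) * (j : ℝ) ^ ((0 : ℝ) - 1)
            * (k : ℝ) ^ (-(0 : ℝ)) :=
          h.weightedRowSum_le_of_ge hζ₀.le le_rfl (by linarith) (by linarith) hj hk hkn
      _ = C * ((1 - ζ)⁻¹ + ζ⁻¹) * ((j : ℝ) ^ (-(1 : ℝ) / 2) * (j : ℝ) ^ (-(1 : ℝ) / 2)) := by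
          rw [← rpow_add hj₀]; norm_num
      _ ≤ _ := by rw [mul_assoc _ ((j : ℝ) ^ _)]; gcongr
  · calc _ ≤ C * ((1 - (ζ + 1 / 2))⁻¹ + (ζ + 1 / 2)⁻¹) * (j : ℝ) ^ ((1 : ℝ) / 2 - 1)
            * (k : ℝ) ^ (-(1 / 2 : ℝ)) :=
          h.weightedRowSum_le_of_ge hζ₀.le (by norm_num) (by linarith) (by linarith)
            hj hk hkn
      _ = C * ((1 / 2 - ζ)⁻¹ + (ζ + 1 / 2)⁻¹) * (j : ℝ) ^ (-(1 : ℝ) / 2)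
            * (k : ℝ) ^ (-(1 : ℝ) / 2) := by
          ring_nf
      _ ≤ _ := by gcongr

lemma weightedRowSum_le_mul_min_of_le (h : CoeffBounds ζ C lam) {K : ℝ} (hζ₀ : 0 < ζ)
    (hζ₁ : ζ < 1 / 2) (hK₀ : (1 - ζ)⁻¹ + ζ⁻¹ ≤ K) (hK₁ : (1 / 2 - ζ)⁻¹ + (ζ + 1 / 2)⁻¹ ≤ K)
    {n j k : ℕ} (hn : 0 < n) (hj : 0 < j) (hnk : n ≤ k) :
    weightedRowSum lam n j k ≤ C * K * (j : ℝ)⁻¹ * (k : ℝ) ^ (ζ - 1) * (n : ℝ) ^ (1 / 2 - ζ) *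
      min ((j : ℝ) ^ ((1 : ℝ) / 2)) ((n : ℝ) ^ ((1 : ℝ) / 2)) := by
  have hn₀ : (0 : ℝ) < n := Nat.cast_pos.2 hn
  have hj₀ : (0 : ℝ) < j := Nat.cast_pos.2 hj
  have hC := h.nonneg
  have hK : 0 ≤ K :=
    le_trans (add_nonneg (inv_nonneg.2 (by linarith)) (inv_nonneg.2 hζ₀.le)) hK₀
  rw [mul_min_of_nonneg _ _ (by positivity)]
  refine le_min ?_ ?_
  · calc _ ≤ C * (1 - (ζ + 1 / 2))⁻¹ * (j : ℝ) ^ ((1 : ℝ) / 2 - 1) * (k : ℝ) ^ (ζ - 1)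
            * (n : ℝ) ^ (1 - (ζ + 1 / 2)) :=
          h.weightedRowSum_le_of_le hζ₀.le (by norm_num) (by linarith) hj hnk
      _ = C * (1 / 2 - ζ)⁻¹ * (j : ℝ)⁻¹ * (k : ℝ) ^ (ζ - 1) * (n : ℝ) ^ (1 / 2 - ζ)
            * (j : ℝ) ^ ((1 : ℝ) / 2) := by
          rw [rpow_sub_one hj₀.ne']; ring_nf
      _ ≤ _ := by gcongr; linarith [inv_pos.2 (by linarith : 0 < ζ + 1 / 2)]
  · calc _ ≤ C * (1 - (ζ + 0))⁻¹ * (j : ℝ) ^ ((0 : ℝ) - 1) * (k : ℝ) ^ (ζ - 1)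
            * (n : ℝ) ^ (1 - (ζ + 0)) :=
          h.weightedRowSum_le_of_le hζ₀.le le_rfl (by linarith) hj hnk
      _ = C * (1 - ζ)⁻¹ * (j : ℝ)⁻¹ * (k : ℝ) ^ (ζ - 1) * (n : ℝ) ^ (1 / 2 - ζ)
            * (n : ℝ) ^ ((1 : ℝ) / 2) := by
          rw [mul_assoc _ ((n : ℝ) ^ (1 / 2 - ζ)), ← rpow_add hn₀, zero_sub, rpow_neg_one]
          ring_nf
      _ ≤ _ := by gcongr; linarith [inv_pos.2 hζ₀]

end CoeffBounds

theorem stmt15 (ζ : ℝ) (hζ1 : 0 < ζ) (hζ2 : ζ < 1 / 2)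
    (lam : ℕ → ℕ → ℝ) (C : ℝ)
    (h1 : ∀ k t : ℕ, 1 ≤ k → k ≤ t →
      |lam k t| ≤ C * (k : ℝ) ^ ζ * (t : ℝ) ^ (-ζ - 1))
    (h2 : ∀ k t : ℕ, 1 ≤ t → t < k →
      |lam k t| ≤ C * (k : ℝ) ^ (ζ - 1) * max ((k : ℝ) ^ (-ζ)) ((t : ℝ) ^ (-ζ))) :
    ∃ C' : ℝ, 0 < C' ∧ ∀ n j k : ℕ, 1 ≤ n → 1 ≤ j → 1 ≤ k →
      (k ≤ n →
        ∑ t ∈ Finset.Icc 1 n, ((t : ℝ) + j)⁻¹ * |lam k t|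
          ≤ C' * (j : ℝ) ^ (-(1 : ℝ) / 2) *
              min ((j : ℝ) ^ (-(1 : ℝ) / 2)) ((k : ℝ) ^ (-(1 : ℝ) / 2))) ∧
      (n ≤ k →
        ∑ t ∈ Finset.Icc 1 n, ((t : ℝ) + j)⁻¹ * |lam k t|
          ≤ C' * (j : ℝ)⁻¹ * (k : ℝ) ^ (ζ - 1) * (n : ℝ) ^ (1 / 2 - ζ) *
              min ((j : ℝ) ^ ((1 : ℝ) / 2)) ((n : ℝ) ^ ((1 : ℝ) / 2))) := by
  obtain ⟨C₀, hCC₀, hC₀⟩ : ∃ C₀, C ≤ C₀ ∧ 0 < C₀ := ⟨max C 1, le_max_left _ _, by positivity⟩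
  have hlam : CoeffBounds ζ C₀ lam := (CoeffBounds.mk h1 h2).mono hCC₀
  have hK₀ : 0 < (1 - ζ)⁻¹ + ζ⁻¹ := add_pos (inv_pos.2 (by linarith)) (inv_pos.2 hζ1)
  have hK₁ : 0 < (1 / 2 - ζ)⁻¹ + (ζ + 1 / 2)⁻¹ :=
    add_pos (inv_pos.2 (by linarith)) (inv_pos.2 (by linarith))
  refine ⟨C₀ * (((1 - ζ)⁻¹ + ζ⁻¹) + ((1 / 2 - ζ)⁻¹ + (ζ + 1 / 2)⁻¹)), by positivity,
    fun n j k hn hj hk => ⟨fun hkn => ?_, fun hnk => ?_⟩⟩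
  · exact hlam.weightedRowSum_le_mul_min_of_ge hζ1 hζ2 (by linarith) (by linarith) hj hk hkn
  · exact hlam.weightedRowSum_le_mul_min_of_le hζ1 hζ2 (by linarith) (by linarith) hn hj hnk
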